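/- arXiv:2108.08056 — 3 statements merged into one kernel-verified Lean document; each statement's English description precedes it below -/
import Mathlib

section
/- Let λ, b ∈ ℝ with λ ∉ 2ℕ₊ (λ not a positive even integer) and λ ≠ 2. If z₁ and z₂ are two solutions of z' = λ z/r + b r on (0, ε) each of the form zᵢ(r) = gᵢ(r²) for analytic functions gᵢ with gᵢ(0) = 0, then z₁ = z₂ on (0, ε). -/
/-!
Write `w = z₁ - z₂ = g(r²)` with `g = g₁ - g₂` analytic and `g 0 = 0`; `w` solves the
homogeneous Euler equation `w' = λ w / r`. The chain rule turns this into `λ g(s) = 2 s g'(s)`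
for small `s > 0`. If `g` did not vanish near `0`, write `g(s) = sⁿ h(s)` with `h 0 ≠ 0` and
`n ≥ 1`; dividing by `sⁿ` and letting `s → 0⁺` gives `(λ - 2n) h 0 = 0`, i.e. the resonance
`λ = 2n`. So `w` vanishes somewhere in `(0, ε)`, and since `r ^ (-λ) * w r` is constant there,
`w` vanishes identically.
-/

open Set Filter Topology

lemma Real.tendsto_sqrt_nhdsGT_zero : Tendsto Real.sqrt (𝓝[>] 0) (𝓝[>] 0) := by
  refine tendsto_nhdsWithin_iff.mpr ⟨?_, ?_⟩
  · simpa using (Real.continuous_sqrt.tendsto 0).mono_left nhdsWithin_le_nhds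
  · filter_upwards [self_mem_nhdsWithin] with s hs using Real.sqrt_pos.mpr hs

lemma tendsto_sq_nhdsGT_zero : Tendsto (fun t : ℝ => t ^ 2) (𝓝[>] 0) (𝓝 0) :=
  ((continuous_pow 2).tendsto' 0 0 (zero_pow two_ne_zero)).mono_left nhdsWithin_le_nhds

lemma eventually_nhdsGT_zero_of_sq {p : ℝ → Prop} (h : ∀ᶠ t in 𝓝[>] 0, p (t ^ 2)) :
    ∀ᶠ s in 𝓝[>] 0, p s := by
  filter_upwards [Real.tendsto_sqrt_nhdsGT_zero.eventually h, self_mem_nhdsWithin]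
    with s hs hs0
  rwa [Real.sq_sqrt hs0.le] at hs

lemma eventually_mul_eq_two_mul_deriv_of_comp_sq {lam ε : ℝ} {w g : ℝ → ℝ} (hε : 0 < ε)
    (hw : ∀ t ∈ Ioo 0 ε, HasDerivAt w (lam * w t / t) t)
    (hwg : ∀ t ∈ Ioo 0 ε, w t = g (t ^ 2)) (hg : ∀ᶠ s in 𝓝 0, DifferentiableAt ℝ g s) :
    ∀ᶠ s in 𝓝[>] 0, lam * g s = 2 * s * deriv g s := by
  refine eventually_nhdsGT_zero_of_sq ?_
  filter_upwards [Ioo_mem_nhdsGT hε, tendsto_sq_nhdsGT_zero.eventually hg] with t ht hgt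
  have hwg_near : w =ᶠ[𝓝 t] fun x => g (x ^ 2) :=
    eventually_of_mem (isOpen_Ioo.mem_nhds ht) hwg
  have hsq : HasDerivAt (fun x : ℝ => x ^ 2) (2 * t) t := by simpa using hasDerivAt_pow 2 t
  have hchain : HasDerivAt w (deriv g (t ^ 2) * (2 * t)) t :=
    (HasDerivAt.comp (h := fun x : ℝ => x ^ 2) t hgt.hasDerivAt hsq).congr_of_eventuallyEq
      hwg_near
  have hslope := (hw t ht).unique hchain
  rw [hwg t ht] at hslope
  field_simp [ht.1.ne'] at hslope
  linarith

theorem AnalyticAt.eventually_eq_zero_of_mul_eq_two_mul_deriv {lam : ℝ} {g : ℝ → ℝ}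
    (hres : ∀ k : ℕ, 0 < k → lam ≠ 2 * k) (hg : AnalyticAt ℝ g 0) (hg0 : g 0 = 0)
    (heuler : ∀ᶠ s in 𝓝[>] 0, lam * g s = 2 * s * deriv g s) :
    ∀ᶠ s in 𝓝 0, g s = 0 := by
  by_contra hne
  obtain ⟨n, h, hh, hh0, hgh⟩ := hg.exists_eventuallyEq_pow_smul_nonzero_iff.mpr hne
  simp only [sub_zero, smul_eq_mul] at hgh
  have hn : n ≠ 0 := by
    rintro rfl
    exact hh0 (by simpa [hg0] using hgh.self_of_nhds.symm)
  have hderiv : ∀ᶠ s in 𝓝 0,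
      HasDerivAt g (n * s ^ (n - 1) * h s + s ^ n * deriv h s) s := by
    filter_upwards [hgh.eventually_nhds, hh.eventually_analyticAt] with s hgs hhs
    exact ((hasDerivAt_pow n s).mul hhs.differentiableAt.hasDerivAt).congr_of_eventuallyEq hgs
  have hreduced : ∀ᶠ s in 𝓝[>] 0, (lam - 2 * n) * h s - 2 * s * deriv h s = 0 := by
    filter_upwards [heuler, self_mem_nhdsWithin,
      (hgh.and hderiv).filter_mono nhdsWithin_le_nhds] with s he hs ⟨hgs, hds⟩
    rw [hds.deriv, hgs] at he
    have hfactor : s ^ n * ((lam - 2 * n) * h s - 2 * s * deriv h s) = 0 := by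
      linear_combination he + 2 * n * h s * mul_pow_sub_one hn s
    exact (mul_eq_zero.mp hfactor).resolve_left (pow_ne_zero n (ne_of_gt hs))
  have hcont : ContinuousAt (fun s => (lam - 2 * n) * h s - 2 * s * deriv h s) 0 := by
    have := hh.continuousAt
    have := hh.deriv.continuousAt
    fun_prop
  have hlimit : (lam - 2 * n) * h 0 = 0 := by
    simpa using tendsto_nhds_unique (hcont.tendsto.mono_left nhdsWithin_le_nhds)
      (tendsto_const_nhds.congr' (hreduced.mono fun _ hs => hs.symm))
  exact hres n (Nat.pos_of_ne_zero hn) (sub_eq_zero.mp ((mul_eq_zero.mp hlimit).resolve_right hh0))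

theorem eqOn_zero_of_hasDerivAt_euler {lam ε : ℝ} {w : ℝ → ℝ}
    (hw : ∀ t ∈ Ioo 0 ε, HasDerivAt w (lam * w t / t) t) (hw0 : ∃ t₀ ∈ Ioo 0 ε, w t₀ = 0) :
    EqOn w 0 (Ioo 0 ε) := by
  obtain ⟨t₀, ht₀, hwt₀⟩ := hw0
  intro t ht
  have hu : ∀ s ∈ Ioo 0 ε, HasDerivAt (fun s => s ^ (-lam) * w s) 0 s := by
    intro s hs
    have hpow := Real.hasDerivAt_rpow_const (p := -lam) (Or.inl hs.1.ne')
    refine (hpow.mul (hw s hs)).congr_deriv ?_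
    rw [Real.rpow_sub hs.1, Real.rpow_one]
    field_simp [hs.1.ne']
    ring
  have hconst := isOpen_Ioo.is_const_of_deriv_eq_zero isPreconnected_Ioo
    (fun s hs => (hu s hs).differentiableAt.differentiableWithinAt)
    (fun s hs => (hu s hs).deriv) ht ht₀
  simp only [hwt₀, mul_zero] at hconst
  exact (mul_eq_zero.mp hconst).resolve_left (Real.rpow_pos_of_pos ht.1 _).ne'

theorem stmt2_general (lam b ε : ℝ)
    (hres : ∀ k : ℕ, 0 < k → lam ≠ 2 * k)
    (z₁ z₂ g₁ g₂ : ℝ → ℝ)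
    (hz₁ : ∀ r ∈ Set.Ioo (0:ℝ) ε, HasDerivAt z₁ (lam * z₁ r / r + b * r) r)
    (hz₂ : ∀ r ∈ Set.Ioo (0:ℝ) ε, HasDerivAt z₂ (lam * z₂ r / r + b * r) r)
    (hg₁ : AnalyticOnNhd ℝ g₁ (Set.Ioo (-ε) ε)) (hg₁0 : g₁ 0 = 0)
    (hg₂ : AnalyticOnNhd ℝ g₂ (Set.Ioo (-ε) ε)) (hg₂0 : g₂ 0 = 0)
    (heq₁ : ∀ r ∈ Set.Ioo (0:ℝ) ε, z₁ r = g₁ (r ^ 2))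
    (heq₂ : ∀ r ∈ Set.Ioo (0:ℝ) ε, z₂ r = g₂ (r ^ 2)) :
    ∀ r ∈ Set.Ioo (0:ℝ) ε, z₁ r = z₂ r := by
  intro r hr
  have hε : 0 < ε := hr.1.trans hr.2
  set w : ℝ → ℝ := fun t => z₁ t - z₂ t
  set g : ℝ → ℝ := fun s => g₁ s - g₂ s
  have hw : ∀ t ∈ Ioo 0 ε, HasDerivAt w (lam * w t / t) t := fun t ht =>
    ((hz₁ t ht).sub (hz₂ t ht)).congr_deriv (by ring)
  have hwg : ∀ t ∈ Ioo 0 ε, w t = g (t ^ 2) := fun t ht => by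
    simp only [w, g, heq₁ t ht, heq₂ t ht]
  have h0 : (0 : ℝ) ∈ Ioo (-ε) ε := ⟨neg_neg_of_pos hε, hε⟩
  have hg : AnalyticAt ℝ g 0 := (hg₁ 0 h0).sub (hg₂ 0 h0)
  have hg_zero : ∀ᶠ s in 𝓝 0, g s = 0 :=
    hg.eventually_eq_zero_of_mul_eq_two_mul_deriv hres (by simp [g, hg₁0, hg₂0])
      (eventually_mul_eq_two_mul_deriv_of_comp_sq hε hw hwg
        (hg.eventually_analyticAt.mono fun _ hs => hs.differentiableAt))
  have hw0 : ∃ t₀ ∈ Ioo 0 ε, w t₀ = 0 := by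
    obtain ⟨t, hgt, ht⟩ :=
      ((tendsto_sq_nhdsGT_zero.eventually hg_zero).and (Ioo_mem_nhdsGT hε)).exists
    exact ⟨t, ht, (hwg t ht).trans hgt⟩
  exact sub_eq_zero.mp (eqOn_zero_of_hasDerivAt_euler hw hw0 hr)

/-- Under the non-resonance condition λ ∉ 2ℕ₊ and λ ≠ 2, admissible
solutions (of the form g(r²) with g analytic, g(0)=0) of z' = λ z/r + b r on (0,ε)
are unique. -/
theorem stmt2 (lam b ε : ℝ) (hε : 0 < ε)
    (hres : ∀ k : ℕ, 0 < k → lam ≠ 2 * k) (hlam : lam ≠ 2)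
    (z₁ z₂ g₁ g₂ : ℝ → ℝ)
    (hz₁ : ∀ r ∈ Set.Ioo (0:ℝ) ε, HasDerivAt z₁ (lam * z₁ r / r + b * r) r)
    (hz₂ : ∀ r ∈ Set.Ioo (0:ℝ) ε, HasDerivAt z₂ (lam * z₂ r / r + b * r) r)
    (hg₁ : AnalyticOnNhd ℝ g₁ (Set.Ioo (-ε) ε)) (hg₁0 : g₁ 0 = 0)
    (hg₂ : AnalyticOnNhd ℝ g₂ (Set.Ioo (-ε) ε)) (hg₂0 : g₂ 0 = 0)
    (heq₁ : ∀ r ∈ Set.Ioo (0:ℝ) ε, z₁ r = g₁ (r ^ 2))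
    (heq₂ : ∀ r ∈ Set.Ioo (0:ℝ) ε, z₂ r = g₂ (r ^ 2)) :
    ∀ r ∈ Set.Ioo (0:ℝ) ε, z₁ r = z₂ r :=
  stmt2_general lam b ε hres z₁ z₂ g₁ g₂ hz₁ hz₂ hg₁ hg₁0 hg₂ hg₂0 heq₁ heq₂
end

section
/- Let B : ℝ^{n+1} × ℝ^{n+1} → ℝⁿ be bilinear, c̃ ∈ ℝⁿ, and f̂ real-analytic with f̂(y) = O(|y|³). Define f̃(x̃, ρ) := f̂(ρ(x̃ + c̃), ρ)/ρ + ρ B((x̃, 0) + 2(c̃, 1), (x̃, 0)) for ρ ≠ 0 (extended by 0 at ρ = 0). Then f̃ extends to a function satisfying f̃(ỹ) = O(|ỹ|²) as ỹ = (x̃, ρ) → 0. -/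
/-!
Writing `Fin.snoc (ρ • (x + c)) ρ = ρ • Fin.snoc (x + c) 1`, the argument of `fhat` is `ρ` times a
vector that stays bounded near the origin, so the cubic bound on `fhat` makes
`ρ⁻¹ • fhat (…)` of order `ρ ^ 2`. The bilinear term is `ρ` times `B` applied to a bounded vector
and to `Fin.snoc x 0 = O(‖(x, ρ)‖)`. Both estimates are `IsBigO` statements at `0` on
`(Fin n → ℝ) × ℝ`, whose max norm is that of `Fin.snoc x ρ`. No case split at `ρ = 0` is needed,
since `0⁻¹ = 0` makes the `ρ ≠ 0` formula vanish there as well.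
-/

open Filter Topology Asymptotics

theorem Fin.smul_snoc {R M : Type*} [SMul R M] {n : ℕ} (r : R) (x : Fin n → M) (a : M) :
    r • (Fin.snoc x a : Fin (n + 1) → M) = Fin.snoc (r • x) (r • a) := by
  ext i
  refine Fin.lastCases ?_ (fun j => ?_) i <;> simp

theorem norm_finSnoc {E : Type*} [SeminormedAddCommGroup E] {n : ℕ} (x : Fin n → E) (a : E) :
    ‖(Fin.snoc x a : Fin (n + 1) → E)‖ = max ‖x‖ ‖a‖ := by
  refine le_antisymm ((pi_norm_le_iff_of_nonneg (by positivity)).2 fun i => ?_) (max_le ?_ ?_)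
  · refine Fin.lastCases ?_ (fun j => ?_) i
    · simp
    · simpa using (norm_le_pi_norm x j).trans (le_max_left _ _)
  · refine (pi_norm_le_iff_of_nonneg (norm_nonneg _)).2 fun j => ?_
    simpa using norm_le_pi_norm (Fin.snoc x a : Fin (n + 1) → E) j.castSucc
  · simpa using norm_le_pi_norm (Fin.snoc x a : Fin (n + 1) → E) (Fin.last n)

theorem isBigO_nhds_zero_norm_pow_iff {E F : Type*} [SeminormedAddCommGroup E]
    [SeminormedAddCommGroup F] {f : E → F} {k : ℕ} :
    (f =O[𝓝 0] fun y => ‖y‖ ^ k) ↔ ∃ C δ : ℝ, 0 < δ ∧ ∀ y, ‖y‖ < δ → ‖f y‖ ≤ C * ‖y‖ ^ k := by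
  simp only [isBigO_iff, Metric.eventually_nhds_iff, dist_zero_right, norm_pow, norm_norm]

theorem isBigO_inv_smul_comp_smul {α 𝕜 E F : Type*} [NormedField 𝕜] [NormedAddCommGroup E]
    [NormedSpace 𝕜 E] [SeminormedAddCommGroup F] [NormedSpace 𝕜 F] {f : E → F} {k : ℕ}
    (hf : f =O[𝓝 0] fun z => ‖z‖ ^ (k + 1)) {l : Filter α} {r : α → 𝕜} {w : α → E}
    (hr : Tendsto r l (𝓝 0)) (hw : w =O[l] fun _ => (1 : 𝕜)) :
    (fun t => (r t)⁻¹ • f (r t • w t)) =O[l] fun t => r t ^ k := by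
  have hrw : (fun t => r t • w t) =O[l] r := by
    simpa using (isBigO_refl r l).smul hw
  have hfrw : (fun t => f (r t • w t)) =O[l] fun t => r t ^ (k + 1) :=
    (hf.comp_tendsto (hrw.trans_tendsto hr)).trans (hrw.norm_left.pow (k + 1))
  refine ((isBigO_refl (fun t => (r t)⁻¹) l).smul hfrw).trans (isBigO_of_le l fun t => ?_)
  rcases eq_or_ne (r t) 0 with h | h
  · simp [h]
  · rw [smul_eq_mul, pow_succ', inv_mul_cancel_left₀ h]

theorem LinearMap.isBigO_apply₂_of_finiteDimensional {α 𝕜 E F G : Type*}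
    [NontriviallyNormedField 𝕜] [CompleteSpace 𝕜]
    [NormedAddCommGroup E] [NormedSpace 𝕜 E] [FiniteDimensional 𝕜 E]
    [NormedAddCommGroup F] [NormedSpace 𝕜 F] [FiniteDimensional 𝕜 F]
    [NormedAddCommGroup G] [NormedSpace 𝕜 G]
    (B : E →ₗ[𝕜] F →ₗ[𝕜] G) (u : α → E) (v : α → F) (l : Filter α) :
    (fun t => B (u t) (v t)) =O[l] fun t => ‖u t‖ * ‖v t‖ :=
  let L : E →L[𝕜] F →L[𝕜] G := LinearMap.toContinuousLinearMap
    ((LinearMap.toContinuousLinearMap : (F →ₗ[𝕜] G) ≃ₗ[𝕜] _).toLinearMap ∘ₗ B)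
  L.isBoundedBilinearMap.isBigO_comp

section

variable {n : ℕ}

theorem isBigO_inv_smul_comp_snoc_smul {fhat : (Fin (n + 1) → ℝ) → Fin n → ℝ}
    (hfhat : fhat =O[𝓝 0] fun y => ‖y‖ ^ 3) (c : Fin n → ℝ) :
    (fun p : (Fin n → ℝ) × ℝ => p.2⁻¹ • fhat (Fin.snoc (p.2 • (p.1 + c)) p.2))
      =O[𝓝 0] fun p => ‖p‖ ^ 2 := by
  have hw : (fun p : (Fin n → ℝ) × ℝ => (Fin.snoc (p.1 + c) 1 : Fin (n + 1) → ℝ))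
      =O[𝓝 0] fun _ => (1 : ℝ) :=
    ((continuous_fst.add continuous_const).finSnoc continuous_const).tendsto 0 |>.isBigO_one ℝ
  have h := isBigO_inv_smul_comp_smul hfhat (continuous_snd.tendsto' 0 0 rfl) hw
  simp only [Fin.smul_snoc, smul_eq_mul, mul_one] at h
  exact h.trans (isBigO_snd_prod'.norm_right.pow 2)

theorem isBigO_smul_bilinear_snoc
    (B : (Fin (n + 1) → ℝ) →ₗ[ℝ] (Fin (n + 1) → ℝ) →ₗ[ℝ] (Fin n → ℝ)) (c : Fin n → ℝ) :
    (fun p : (Fin n → ℝ) × ℝ =>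
      p.2 • B ((Fin.snoc p.1 0 : Fin (n + 1) → ℝ) + (2 : ℝ) • (Fin.snoc c 1 : Fin (n + 1) → ℝ))
        (Fin.snoc p.1 0)) =O[𝓝 0] fun p => ‖p‖ ^ 2 := by
  have hu : (fun p : (Fin n → ℝ) × ℝ =>
      (Fin.snoc p.1 0 : Fin (n + 1) → ℝ) + (2 : ℝ) • (Fin.snoc c 1 : Fin (n + 1) → ℝ))
        =O[𝓝 0] fun _ => (1 : ℝ) :=
    ((continuous_fst.finSnoc continuous_const).add continuous_const).tendsto 0 |>.isBigO_one ℝ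
  have hv : (fun p : (Fin n → ℝ) × ℝ => (Fin.snoc p.1 0 : Fin (n + 1) → ℝ))
      =O[𝓝 0] fun p => ‖p‖ :=
    isBigO_of_le _ fun p => by simpa [norm_finSnoc] using norm_fst_le p
  have hρ : (fun p : (Fin n → ℝ) × ℝ => p.2) =O[𝓝 0] fun p => ‖p‖ := isBigO_snd_prod'.norm_right
  have h := hρ.smul ((B.isBigO_apply₂_of_finiteDimensional _ _ _).trans
    (hu.norm_left.mul hv.norm_left))
  simpa [pow_two] using h

end

theorem stmt8_general (n : ℕ)
    (B : (Fin (n + 1) → ℝ) →ₗ[ℝ] (Fin (n + 1) → ℝ) →ₗ[ℝ] (Fin n → ℝ))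
    (c : Fin n → ℝ) (fhat : (Fin (n + 1) → ℝ) → Fin n → ℝ)
    (hO3 : ∃ C δ : ℝ, 0 < δ ∧ ∀ y : Fin (n + 1) → ℝ, ‖y‖ < δ → ‖fhat y‖ ≤ C * ‖y‖ ^ 3) :
    ∃ C δ : ℝ, 0 < δ ∧ ∀ (x : Fin n → ℝ) (ρ : ℝ),
      ‖(Fin.snoc x ρ : Fin (n + 1) → ℝ)‖ < δ →
      ‖(if ρ = 0 then (0 : Fin n → ℝ)
        else ρ⁻¹ • fhat (Fin.snoc (ρ • (x + c)) ρ : Fin (n + 1) → ℝ)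
          + ρ • B ((Fin.snoc x 0 : Fin (n + 1) → ℝ)
              + (2 : ℝ) • (Fin.snoc c 1 : Fin (n + 1) → ℝ))
            (Fin.snoc x 0 : Fin (n + 1) → ℝ))‖
        ≤ C * ‖(Fin.snoc x ρ : Fin (n + 1) → ℝ)‖ ^ 2 := by
  obtain ⟨C, δ, hδ, hbound⟩ := isBigO_nhds_zero_norm_pow_iff.1 <|
    (isBigO_inv_smul_comp_snoc_smul (isBigO_nhds_zero_norm_pow_iff.2 hO3) c).add
      (isBigO_smul_bilinear_snoc B c)
  refine ⟨C, δ, hδ, fun x ρ h => ?_⟩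
  rw [norm_finSnoc] at h ⊢
  refine (le_of_eq (congrArg norm (ite_eq_right_iff.2 fun hρ => ?_))).trans (hbound (x, ρ) h)
  simp [hρ]

/-- The new nonlinearity
f̃(x̃,ρ) = f̂(ρ(x̃+c̃),ρ)/ρ + ρ B((x̃,0)+2(c̃,1),(x̃,0)) (extended by 0 at ρ = 0)
is O(|ỹ|²) as ỹ = (x̃,ρ) → 0. -/
theorem stmt8 (n : ℕ)
    (B : (Fin (n + 1) → ℝ) →ₗ[ℝ] (Fin (n + 1) → ℝ) →ₗ[ℝ] (Fin n → ℝ))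
    (c : Fin n → ℝ) (fhat : (Fin (n + 1) → ℝ) → Fin n → ℝ)
    (hfa : ∀ y, AnalyticAt ℝ fhat y)
    (hO3 : ∃ C δ : ℝ, 0 < δ ∧ ∀ y : Fin (n + 1) → ℝ, ‖y‖ < δ → ‖fhat y‖ ≤ C * ‖y‖ ^ 3) :
    ∃ C δ : ℝ, 0 < δ ∧ ∀ (x : Fin n → ℝ) (ρ : ℝ),
      ‖(Fin.snoc x ρ : Fin (n + 1) → ℝ)‖ < δ →
      ‖(if ρ = 0 then (0 : Fin n → ℝ)
        else ρ⁻¹ • fhat (Fin.snoc (ρ • (x + c)) ρ : Fin (n + 1) → ℝ)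
          + ρ • B ((Fin.snoc x 0 : Fin (n + 1) → ℝ)
              + (2 : ℝ) • (Fin.snoc c 1 : Fin (n + 1) → ℝ))
            (Fin.snoc x 0 : Fin (n + 1) → ℝ))‖
        ≤ C * ‖(Fin.snoc x ρ : Fin (n + 1) → ℝ)‖ ^ 2 :=
  stmt8_general n B c fhat hO3
end

section
/- For m ∈ {2, 3} and all u > 0, λ₄(u; μₘ) = (1/4)(-5 + √(48m/(1 + u^{-m}) + 9)) < 2. Hence the non-resonance condition λ₄ ∉ 2ℕ₊ holds for all h₀ > 0, z₀ < 0 when μ(Ψ) = 1 + Ψ² or μ(Ψ) = 1 + Ψ³. -/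
/-!
Since `u ≥ 0`, the denominator `1 + u⁻ᵐ` is at least `1`, so the radicand is at most
`48 · 3 + 9 = 153 < 13²`. Hence `λ₄ < (-5 + 13) / 4 = 2`, which is at most every positive even integer.
-/

/-- `λ₄(u; μₘ)`, the largest eigenvalue of the linearization for the viscosity `μₘ(Ψ) = 1 + Ψᵐ`. -/
noncomputable def lambdaFour (m : ℕ) (u : ℝ) : ℝ :=
  (1/4) * (-5 + √(48 * m / (1 + (u ^ m)⁻¹) + 9))

lemma lambdaFour_lt_two {m : ℕ} (hm : m ≤ 3) {u : ℝ} (hu : 0 ≤ u) : lambdaFour m u < 2 := by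
  have hquot : 48 * (m : ℝ) / (1 + (u ^ m)⁻¹) ≤ 144 := by
    have hm' : (m : ℝ) ≤ 3 := by exact_mod_cast hm
    calc 48 * (m : ℝ) / (1 + (u ^ m)⁻¹)
        ≤ 48 * m := div_le_self (by positivity) (le_add_of_nonneg_right (by positivity))
      _ ≤ 144 := by linarith
  have hsqrt : √(48 * m / (1 + (u ^ m)⁻¹) + 9) < 13 := by
    rw [Real.sqrt_lt' (by norm_num)]
    linarith
  unfold lambdaFour
  linarith

lemma lambdaFour_ne_two_mul {m : ℕ} (hm : m ≤ 3) {u : ℝ} (hu : 0 ≤ u) {k : ℕ} (hk : 0 < k) :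
    lambdaFour m u ≠ 2 * k := by
  have hk' : (1 : ℝ) ≤ k := by exact_mod_cast hk
  exact (lambdaFour_lt_two hm hu).trans_le (by linarith) |>.ne

/-- For m ∈ {2,3} and all h₀ > 0, z₀ < 0 (u = h₀z₀²),
λ₄(u; μₘ) < 2; hence the non-resonance condition λ₄ ∉ 2ℕ₊ holds. -/
theorem stmt18 (m : ℕ) (hm : m ∈ ({2, 3} : Set ℕ)) :
    ∀ h₀ > (0:ℝ), ∀ z₀ < (0:ℝ),
      (1/4) * (-5 + Real.sqrt (48 * m / (1 + ((h₀ * z₀ ^ 2) ^ m)⁻¹) + 9)) < 2 ∧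
      ∀ k : ℕ, 0 < k →
        (1/4) * (-5 + Real.sqrt (48 * m / (1 + ((h₀ * z₀ ^ 2) ^ m)⁻¹) + 9))
          ≠ 2 * k := by
  intro h₀ hh₀ z₀ _
  have hm3 : m ≤ 3 := by rcases hm with rfl | rfl <;> norm_num
  have hu : 0 ≤ h₀ * z₀ ^ 2 := by positivity
  exact ⟨lambdaFour_lt_two hm3 hu, fun k hk => lambdaFour_ne_two_mul hm3 hu hk⟩
end
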